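/- Suppose p, q, V₀ ∈ ℚ(x), set V₊ = p + q, V* = p + x⁻³·q, V₋ = p + x⁻⁶·q, and assume x⁻²·V₊ − x²·V₋ = (x − x⁻¹)·V₀. Then (x⁻² + x)·V* − (x² + x)·V₋ = (x − x⁻¹)·V₀. -/

import Mathlib

/-! Expanded in `p` and `q`, the left-hand side of the new relation equals that of the given
skein relation identically: the extra terms `t * p` and `t⁻¹ ^ 5 * q` produced by the added
coefficient `t` cancel between the two products. -/

theorem skein_star_sub_eq_skein_sub {K : Type*} [Field K] {t : K} (ht : t ≠ 0) (p q : K) :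
    (t⁻¹ ^ 2 + t) * (p + t⁻¹ ^ 3 * q) - (t ^ 2 + t) * (p + t⁻¹ ^ 6 * q)
      = t⁻¹ ^ 2 * (p + q) - t ^ 2 * (p + t⁻¹ ^ 6 * q) := by
  field_simp
  ring

theorem stmt_8 (p q V₀ : RatFunc ℚ)
    (hskein : (RatFunc.X)⁻¹ ^ 2 * (p + q)
        - RatFunc.X ^ 2 * (p + (RatFunc.X)⁻¹ ^ 6 * q)
      = (RatFunc.X - (RatFunc.X)⁻¹) * V₀) :
    ((RatFunc.X)⁻¹ ^ 2 + RatFunc.X) * (p + (RatFunc.X)⁻¹ ^ 3 * q)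
        - (RatFunc.X ^ 2 + RatFunc.X) * (p + (RatFunc.X)⁻¹ ^ 6 * q)
      = (RatFunc.X - (RatFunc.X)⁻¹) * V₀ := by
  rw [skein_star_sub_eq_skein_sub RatFunc.X_ne_zero, hskein]
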